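/- Let G be a finite graph and let G⁺ be the graph obtained from G by adding one new vertex adjacent to all vertices of G. Then the chromatic number of G⁺ equals χ(G)+1, and for every natural number k, the Bell colouring graph of partitions of V(G) into at least k independent sets is isomorphic to the Bell colouring graph of partitions of V(G⁺) into at least k+1 independent sets. (Here the Bell colouring graph has as vertices partitions of the vertex set into independent sets, with an edge between two partitions iff one is obtained from the other by changing the part of a single vertex.) -/

import Mathlib

open Finset

variable {V : Type*} [Fintype V] [DecidableEq V]

def IsISP (G : SimpleGraph V) (P : Finpartition (univ : Finset V)) : Prop :=
  ∀ A ∈ P.parts, ∀ u ∈ A, ∀ v ∈ A, ¬ G.Adj u v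

def samePart (P : Finpartition (univ : Finset V)) (u v : V) : Prop :=
  ∃ A ∈ P.parts, u ∈ A ∧ v ∈ A

def MovedBy (P Q : Finpartition (univ : Finset V)) (x : V) : Prop :=
  P ≠ Q ∧ ∀ u v : V, u ≠ x → v ≠ x → (samePart P u v ↔ samePart Q u v)

def BellGraph (G : SimpleGraph V) :
    SimpleGraph {P : Finpartition (univ : Finset V) // IsISP G P} where
  Adj P Q := ∃ x, MovedBy P.1 Q.1 x
  symm := by
    refine ⟨?_⟩
    rintro P Q ⟨x, hne, h⟩
    exact ⟨x, Ne.symm hne, fun u v hu hv => (h u v hu hv).symm⟩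
  loopless := by
    refine ⟨?_⟩
    rintro P ⟨x, hne, _⟩
    exact hne rfl

def UpperBell (G : SimpleGraph V) (k : ℕ) :
    SimpleGraph {P : Finpartition (univ : Finset V) // IsISP G P ∧ k ≤ P.parts.card} where
  Adj P Q := ∃ x, MovedBy P.1 Q.1 x
  symm := by
    refine ⟨?_⟩
    rintro P Q ⟨x, hne, h⟩
    exact ⟨x, Ne.symm hne, fun u v hu hv => (h u v hu hv).symm⟩
  loopless := by
    refine ⟨?_⟩
    rintro P ⟨x, hne, _⟩
    exact hne rfl

def IsUniversal (G : SimpleGraph V) (v : V) : Prop :=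
  ∀ w, w ≠ v → G.Adj v w

def addUniversal (G : SimpleGraph V) : SimpleGraph (Option V) where
  Adj a b := a ≠ b ∧ ∀ u v, a = some u → b = some v → G.Adj u v
  symm := by
    refine ⟨?_⟩
    rintro a b ⟨h, h2⟩
    exact ⟨h.symm, fun u v hu hv => (h2 v u hv hu).symm⟩
  loopless := by refine ⟨?_⟩; rintro a ⟨h, _⟩; exact h rfl

/-!
The universal vertex `none` of `addUniversal G` is adjacent to every other vertex, so in any
independent set partition it forms a part `{none}` of its own, and in any colouring its colour is
used by no other vertex. Deleting that part (or colour) is therefore a bijection onto the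
independent set partitions (colourings) of `G` with one part (colour) fewer, and moving a vertex
of `G` in a partition corresponds to moving the same vertex in the extended partition.
-/

namespace Finpartition

variable {α β : Type*} [DecidableEq α] [DecidableEq β]

def embed (f : α ↪ β) {s : Finset α} (P : Finpartition s) : Finpartition (s.map f) where
  parts := P.parts.map (mapEmbedding f).toEmbedding
  supIndep := by
    rw [supIndep_iff_pairwiseDisjoint, coe_map,
      (mapEmbedding f).toEmbedding.injective.injOn.pairwiseDisjoint_image]
    exact fun A hA B hB hAB => (disjoint_map f).2 (P.disjoint hA hB hAB)
  sup_parts := by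
    ext x
    conv_rhs => rw [← P.sup_parts]
    simp only [mem_sup, mem_map]
    aesop
  bot_notMem := by simp

@[simp]
lemma card_embed_parts (f : α ↪ β) {s : Finset α} (P : Finpartition s) :
    #(P.embed f).parts = #P.parts :=
  card_map _

lemma parts_eq_image_part {s : Finset α} (P : Finpartition s) : P.parts = s.image P.part := by
  ext t
  rw [mem_image]
  exact ⟨fun ht => P.part_surjOn ht, fun ⟨_, ha, h⟩ => h ▸ P.part_mem.2 ha⟩

end Finpartition

section SamePart

variable {P Q : Finpartition (univ : Finset V)}

lemma samePart_iff_mem_part {u v : V} : samePart P u v ↔ u ∈ P.part v :=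
  P.mem_part_iff_exists.symm

lemma samePart_refl (P : Finpartition (univ : Finset V)) (u : V) : samePart P u u := by
  simp [samePart_iff_mem_part]

lemma samePart.symm {u v : V} (h : samePart P u v) : samePart P v u :=
  let ⟨A, hA, hu, hv⟩ := h
  ⟨A, hA, hv, hu⟩

lemma samePart_comm {u v : V} : samePart P u v ↔ samePart P v u :=
  ⟨samePart.symm, samePart.symm⟩

lemma samePart.trans {u v w : V} (huv : samePart P u v) (hvw : samePart P v w) :
    samePart P u w := by
  obtain ⟨A, hA, hu, hv⟩ := huv
  obtain ⟨B, hB, hv', hw⟩ := hvw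
  exact ⟨A, hA, hu, P.eq_of_mem_parts hB hA hv' hv ▸ hw⟩

def samePartSetoid (P : Finpartition (univ : Finset V)) : Setoid V :=
  ⟨samePart P, ⟨samePart_refl P, samePart.symm, samePart.trans⟩⟩

lemma Finpartition.ext_samePart (h : ∀ u v, samePart P u v ↔ samePart Q u v) : P = Q := by
  have hpart : P.part = Q.part := by
    ext v u
    simp only [← samePart_iff_mem_part, h]
  ext1
  rw [P.parts_eq_image_part, Q.parts_eq_image_part, hpart]

section Comap

variable {α β : Type*} [Fintype α] [DecidableEq α] [Fintype β] [DecidableEq β]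

open Classical in
noncomputable def Finpartition.comap (f : α → β) (Q : Finpartition (univ : Finset β)) :
    Finpartition (univ : Finset α) :=
  .ofSetoid ((samePartSetoid Q).comap f)

open Classical in
lemma Finpartition.samePart_comap {f : α → β} {Q : Finpartition (univ : Finset β)} {u v : α} :
    samePart (Q.comap f) u v ↔ samePart Q (f u) (f v) := by
  rw [samePart_iff_mem_part, comap, mem_part_ofSetoid_iff_rel]
  exact samePart_comm

end Comap

lemma isISP_iff_samePart {G : SimpleGraph V} :
    IsISP G P ↔ ∀ u v, samePart P u v → ¬ G.Adj u v :=
  ⟨fun h _ _ ⟨A, hA, hu, hv⟩ => h A hA _ hu _ hv,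
    fun h A hA u hu v hv => h u v ⟨A, hA, hu, hv⟩⟩

end SamePart

section Cone

variable {P : Finpartition (univ : Finset V)} {R : Finpartition (univ : Finset (Option V))}

def cone (P : Finpartition (univ : Finset V)) : Finpartition (univ : Finset (Option V)) :=
  (P.embed .some).extend (singleton_ne_empty none) (by simp)
    (by ext x; cases x <;> simp)

lemma card_cone_parts (P : Finpartition (univ : Finset V)) :
    #(cone P).parts = #P.parts + 1 := by
  rw [cone, Finpartition.card_extend, Finpartition.card_embed_parts]

lemma samePart_cone_some {u v : V} : samePart (cone P) (some u) (some v) ↔ samePart P u v := by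
  simp [samePart, cone, Finpartition.embed]

lemma samePart_cone_none {w : Option V} : samePart (cone P) none w ↔ w = none := by
  simp [samePart, cone, Finpartition.embed]

lemma not_samePart_cone_some_none {u : V} : ¬ samePart (cone P) (some u) none := by
  simp [samePart, cone, Finpartition.embed]

lemma comap_some_cone (P : Finpartition (univ : Finset V)) : (cone P).comap some = P :=
  Finpartition.ext_samePart fun _ _ => Finpartition.samePart_comap.trans samePart_cone_some

lemma cone_injective : Function.Injective (cone (V := V)) :=
  Function.LeftInverse.injective comap_some_cone

lemma cone_comap_some (hR : ∀ w, samePart R none w ↔ w = none) : cone (R.comap some) = R := by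
  refine Finpartition.ext_samePart fun a b => ?_
  match a, b with
  | none, b => rw [samePart_cone_none, hR]
  | some u, none => rw [samePart_comm, samePart_cone_none, samePart_comm, hR]
  | some u, some v => rw [samePart_cone_some, Finpartition.samePart_comap]

end Cone

section AddUniversal

variable {W : Type*} {G : SimpleGraph W}

lemma addUniversal_adj_some {u v : W} : (addUniversal G).Adj (some u) (some v) ↔ G.Adj u v :=
  ⟨fun h => h.2 u v rfl rfl,
    fun h => ⟨Option.some_injective _ |>.ne h.ne, by rintro _ _ ⟨⟩ ⟨⟩; exact h⟩⟩

lemma addUniversal_adj_none {w : Option W} (hw : w ≠ none) : (addUniversal G).Adj none w :=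
  ⟨hw.symm, by rintro _ _ ⟨⟩⟩

lemma colorable_addUniversal_succ_iff {n : ℕ} :
    (addUniversal G).Colorable (n + 1) ↔ G.Colorable n := by
  constructor
  · rintro ⟨C⟩
    have hC : ∀ v, C (some v) ≠ C none :=
      fun v => C.valid (addUniversal_adj_none (Option.some_ne_none v)).symm
    let C' : G.Coloring {c // c ≠ C none} := .mk (fun v => ⟨C (some v), hC v⟩)
      fun h heq => C.valid (addUniversal_adj_some.2 h) (congrArg Subtype.val heq)
    simpa [Fintype.card_subtype_compl] using C'.colorable
  · rintro ⟨C⟩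
    let C' : (addUniversal G).Coloring (Option (Fin n)) :=
      .mk (Option.map C) fun {a b} h heq => by
        match a, b with
        | none, none => exact h.ne rfl
        | none, some _ | some _, none => simp at heq
        | some _, some _ => exact C.valid (addUniversal_adj_some.1 h) (Option.some_injective _ heq)
    simpa using C'.colorable

lemma chromaticNumber_addUniversal :
    (addUniversal G).chromaticNumber = G.chromaticNumber + 1 := by
  refine eq_of_forall_ge_iff fun c => ?_
  induction c using ENat.recTopCoe with
  | top => simp
  | coe n =>
    cases n with
    | zero => simp
    | succ n =>
      rw [SimpleGraph.chromaticNumber_le_iff_colorable, colorable_addUniversal_succ_iff,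
        Nat.cast_succ, ENat.add_le_add_iff_right ENat.one_ne_top,
        SimpleGraph.chromaticNumber_le_iff_colorable]

end AddUniversal

section ConeBell

variable {G : SimpleGraph V} {P Q : Finpartition (univ : Finset V)}
  {R : Finpartition (univ : Finset (Option V))}

lemma isISP_cone_iff : IsISP (addUniversal G) (cone P) ↔ IsISP G P := by
  simp [isISP_iff_samePart, Option.forall, samePart_cone_none, samePart_cone_some,
    not_samePart_cone_some_none, addUniversal_adj_some]

lemma isISP_comap_some (hR : IsISP (addUniversal G) R) : IsISP G (R.comap some) := by
  rw [isISP_iff_samePart] at hR ⊢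
  exact fun u v h => addUniversal_adj_some.not.1 (hR _ _ (Finpartition.samePart_comap.1 h))

lemma samePart_none_iff_of_isISP (hR : IsISP (addUniversal G) R) {w : Option V} :
    samePart R none w ↔ w = none := by
  refine ⟨fun h => ?_, fun h => h ▸ samePart_refl R none⟩
  by_contra hw
  exact isISP_iff_samePart.1 hR _ _ h (addUniversal_adj_none hw)

lemma not_movedBy_cone_none : ¬ MovedBy (cone P) (cone Q) none := by
  rintro ⟨hne, hsame⟩
  refine hne (congrArg cone (Finpartition.ext_samePart fun u v => ?_))
  simpa [samePart_cone_some] using hsame (some u) (some v)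

lemma movedBy_cone_some_iff {x : V} : MovedBy (cone P) (cone Q) (some x) ↔ MovedBy P Q x := by
  simp [MovedBy, cone_injective.ne_iff, Option.forall, samePart_cone_none, samePart_cone_some,
    not_samePart_cone_some_none]

lemma exists_movedBy_cone_iff : (∃ y, MovedBy (cone P) (cone Q) y) ↔ ∃ x, MovedBy P Q x := by
  simp [Option.exists, not_movedBy_cone_none, movedBy_cone_some_iff]

end ConeBell

noncomputable def upperBellConeIso (G : SimpleGraph V) (k : ℕ) :
    UpperBell G k ≃g UpperBell (addUniversal G) (k + 1) where
  toFun P := ⟨cone P.1, isISP_cone_iff.2 P.2.1, by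
    rw [card_cone_parts]
    exact Nat.succ_le_succ P.2.2⟩
  invFun Q := ⟨Q.1.comap some, isISP_comap_some Q.2.1, by
    have hcard := card_cone_parts (Q.1.comap some)
    rw [cone_comap_some fun _ => samePart_none_iff_of_isISP Q.2.1] at hcard
    have hk := Q.2.2
    omega⟩
  left_inv P := Subtype.ext (comap_some_cone P.1)
  right_inv Q := Subtype.ext (cone_comap_some fun _ => samePart_none_iff_of_isISP Q.2.1)
  map_rel_iff' := exists_movedBy_cone_iff

theorem stmt0 (G : SimpleGraph V) :
    (addUniversal G).chromaticNumber = G.chromaticNumber + 1 ∧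
    ∀ k : ℕ, Nonempty (UpperBell G k ≃g UpperBell (addUniversal G) (k + 1)) :=
  ⟨chromaticNumber_addUniversal, fun k => ⟨upperBellConeIso G k⟩⟩
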